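/- Let N ≥ 1 and let φ, ψ ∈ ℂ^N. If |P_φ(k/(2N−1))| = |P_ψ(k/(2N−1))| and |P_φ′(k/(2N−1))| = |P_ψ′(k/(2N−1))| for every k = 0, 1, …, 2N−2, then there exists λ ∈ ℂ with |λ| = 1 such that ψ = λ·φ. -/

import Mathlib

/-
View `P_φ`, `P_ψ` as polynomials `P`, `Q` of degree `n = N - 1` in `z = e^{2πix}`. On the unit
circle `conj z = z⁻¹`, so `|P(z)|² zⁿ` is the value of the polynomial `P(z) · zⁿ conj P(1/conj z)`
of degree `2n`, which is determined by its values at the `2n + 1` sample points (the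
`(2n+1)`-th roots of unity); the same holds for `zP'`, which is `P_φ′ / 2πi`. Differentiating the
resulting identity `|P|² = |Q|²` also matches `Im (conj P · zP')` along the circle, so
`conj P · zP'` and `conj Q · zQ'` have equal modulus and imaginary part there: they agree, or they
are opposite conjugates. The second alternative forces `∑ j |φ_j|² + ∑ j |ψ_j|² = 0` (compare
the coefficients of `zⁿ`, i.e. the mean values on the circle), so `P` and `Q` are constant and
the first alternative holds trivially. The first, combined with `|P| = |Q|`, gives
`Q P' = P Q'`, so `Q` is a constant multiple of `P`, of modulus one.
-/

open Real

/-- The analytic trigonometric polynomial `P_ψ(x) = ∑ ψ_j e^{2πijx}` associated to `ψ ∈ ℂ^N`. -/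
noncomputable def trigPoly {N : ℕ} (ψ : Fin N → ℂ) (x : ℝ) : ℂ :=
  ∑ j : Fin N, ψ j * Complex.exp (2 * Real.pi * Complex.I * (j : ℕ) * x)

/-- Its derivative `P_ψ′(x) = ∑ 2πij·ψ_j e^{2πijx}`. -/
noncomputable def trigPolyDeriv {N : ℕ} (ψ : Fin N → ℂ) (x : ℝ) : ℂ :=
  ∑ j : Fin N, 2 * Real.pi * Complex.I * (j : ℕ) * ψ j *
    Complex.exp (2 * Real.pi * Complex.I * (j : ℕ) * x)

open Polynomial ComplexConjugate Finset

theorem Complex.sub_mul_add_conj_eq_zero {w₁ w₂ : ℂ} (hn : ‖w₁‖ = ‖w₂‖)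
    (hi : w₁ - conj w₁ = w₂ - conj w₂) : (w₁ - w₂) * (w₁ + conj w₂) = 0 := by
  have hsq : w₁ * conj w₁ = w₂ * conj w₂ := by rw [Complex.mul_conj', Complex.mul_conj', hn]
  linear_combination w₁ * hi + hsq

namespace Polynomial

theorem coeff_X_mul_derivative {R : Type*} [Semiring R] (p : R[X]) (i : ℕ) :
    (X * derivative p).coeff i = i * p.coeff i := by
  cases i with
  | zero => simp
  | succ i => rw [coeff_X_mul, coeff_derivative, ← Nat.cast_succ, Nat.cast_comm]

theorem natDegree_X_mul_derivative_le {R : Type*} [Semiring R] (p : R[X]) :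
    (X * derivative p).natDegree ≤ p.natDegree :=
  natDegree_le_iff_coeff_eq_zero.mpr fun i hi ↦ by
    rw [coeff_X_mul_derivative, coeff_eq_zero_of_natDegree_lt (by exact_mod_cast hi), mul_zero]

theorem exists_eq_C_mul_of_wronskian_eq_zero {K : Type*} [Field K] [CharZero K]
    {p q : K[X]} (hp : p ≠ 0) (h : wronskian p q = 0) : ∃ c, q = C c * p := by
  classical
  -- after dividing out the gcd, the two coprime cofactors have zero Wronskian, hence are constant
  obtain ⟨p₁, q₁, hp₁, hq₁, hunit⟩ := extract_gcd p q
  set g := gcd p q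
  have hg : g ≠ 0 := gcd_ne_zero_of_left hp
  have hW : wronskian p₁ q₁ = 0 := by
    have : g ^ 2 * wronskian p₁ q₁ = 0 := by
      rw [← h, hp₁, hq₁]
      simp only [wronskian, derivative_mul]
      ring
    simpa [hg] using this
  obtain ⟨hp₁', hq₁'⟩ := ((gcd_isUnit_iff _ _).mp hunit).wronskian_eq_zero_iff.mp hW
  rw [eq_C_of_derivative_eq_zero hp₁'] at hp₁
  rw [eq_C_of_derivative_eq_zero hq₁'] at hq₁
  have : p₁.coeff 0 ≠ 0 := by rintro h0; simp [h0] at hp₁; exact hp hp₁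
  refine ⟨q₁.coeff 0 / p₁.coeff 0, ?_⟩
  rw [hp₁, hq₁, mul_left_comm, ← C_mul, div_mul_cancel₀ _ this]

theorem eq_zero_of_eval_primitiveRoot_pow_eq_zero {R : Type*} [CommRing R] [IsDomain R] {ζ : R}
    {M : ℕ} {W : R[X]} (hζ : IsPrimitiveRoot ζ M) (hW : W.natDegree < M)
    (h : ∀ k < M, W.eval (ζ ^ k) = 0) : W = 0 :=
  eq_zero_of_natDegree_lt_card_of_eval_eq_zero W (f := fun k : Fin M ↦ ζ ^ (k : ℕ))
    (fun i j hij ↦ Fin.ext (hζ.pow_inj i.2 j.2 hij)) (fun k ↦ h k k.2) (by simpa using hW)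

theorem eq_zero_of_eval_eq_zero_of_norm_eq_one {W : ℂ[X]}
    (h : ∀ z : ℂ, ‖z‖ = 1 → W.eval z = 0) : W = 0 := by
  have hM : W.natDegree + 1 ≠ 0 := by omega
  have hζ := Complex.isPrimitiveRoot_exp _ hM
  exact eq_zero_of_eval_primitiveRoot_pow_eq_zero hζ (Nat.lt_succ_self _)
    fun k _ ↦ h _ (by rw [norm_pow, hζ.norm'_eq_one hM, one_pow])

/-- `Xⁿ · conj p (1 / X)` for `p` of degree at most `n`; at `z` on the unit circle it takes the
value `conj (p.eval z) * z ^ n` (`eval_conjReflect`). -/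
noncomputable def conjReflect (n : ℕ) (p : ℂ[X]) : ℂ[X] := reflect n (p.map (starRingEnd ℂ))

section conjReflect

variable {n : ℕ} {p q : ℂ[X]}

theorem conjReflect_eq_zero_iff : conjReflect n p = 0 ↔ p = 0 := by
  simp [conjReflect, reflect_eq_zero_iff]

theorem natDegree_conjReflect_le (hp : p.natDegree ≤ n) : (conjReflect n p).natDegree ≤ n :=
  natDegree_reflect_le.trans (max_le le_rfl ((natDegree_map_le).trans hp))

theorem conjReflect_C_mul (c : ℂ) (p : ℂ[X]) :
    conjReflect n (C c * p) = C (conj c) * conjReflect n p := by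
  simp [conjReflect, Polynomial.map_mul, reflect_C_mul]

theorem coeff_conjReflect {i : ℕ} (hi : i ≤ n) :
    (conjReflect n p).coeff i = conj (p.coeff (n - i)) := by
  rw [conjReflect, coeff_reflect, revAt_le hi, coeff_map]

theorem coeff_conjReflect_mul (n : ℕ) (p q : ℂ[X]) :
    (conjReflect n p * q).coeff n = ∑ i ∈ range (n + 1), conj (p.coeff i) * q.coeff i := by
  rw [coeff_mul, Nat.sum_antidiagonal_eq_sum_range_succ
    fun i j ↦ (conjReflect n p).coeff i * q.coeff j, ← sum_range_reflect]
  refine sum_congr rfl fun i hi ↦ ?_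
  have hi : i ≤ n := Nat.lt_succ_iff.mp (mem_range.mp hi)
  rw [coeff_conjReflect (by omega), show n - (n.succ - 1 - i) = i by omega]

theorem eval_conjReflect (hp : p.natDegree ≤ n) {z : ℂ} (hz : ‖z‖ = 1) :
    (conjReflect n p).eval z = conj (p.eval z) * z ^ n := by
  have hzz : conj z * z = 1 := by rw [mul_comm, Complex.mul_conj', hz]; simp
  let := invertibleOfRightInverse _ _ hzz
  have h : (conjReflect n p).eval z * conj z ^ n = (p.map (starRingEnd ℂ)).eval (conj z) := by
    have h := eval₂_reflect_mul_pow (RingHom.id ℂ) (conj z) n (p.map (starRingEnd ℂ))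
      (natDegree_map_le.trans hp)
    rwa [invOf_eq_right_inv hzz] at h
  rw [eval_map, eval₂_hom] at h
  rw [← h, mul_assoc, ← mul_pow, hzz, one_pow, mul_one]

theorem eval_mul_conjReflect (hp : p.natDegree ≤ n) {z : ℂ} (hz : ‖z‖ = 1) :
    (p * conjReflect n p).eval z = (‖p.eval z‖ ^ 2 : ℂ) * z ^ n := by
  rw [eval_mul, eval_conjReflect hp hz, ← mul_assoc, Complex.mul_conj']

theorem conjReflect_X_mul_derivative (hp : p.natDegree ≤ n) :
    conjReflect n (X * derivative p) =
      C (n : ℂ) * conjReflect n p - X * derivative (conjReflect n p) := by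
  ext i
  rw [coeff_sub, coeff_C_mul, coeff_X_mul_derivative]
  rcases le_or_gt i n with hi | hi
  · rw [coeff_conjReflect hi, coeff_conjReflect hi, coeff_X_mul_derivative, map_mul,
      map_natCast, Nat.cast_sub hi]
    ring
  · have hzero := coeff_eq_zero_of_natDegree_lt ((natDegree_conjReflect_le hp).trans_lt hi)
    rw [hzero, conjReflect, coeff_reflect, revAt_eq_self_of_lt hi, coeff_map,
      coeff_X_mul_derivative, coeff_eq_zero_of_natDegree_lt (hp.trans_lt hi)]
    simp

theorem mul_conjReflect_eq_of_norm_eval_pow_eq {ζ : ℂ} (hζ : IsPrimitiveRoot ζ (2 * n + 1))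
    (hp : p.natDegree ≤ n) (hq : q.natDegree ≤ n)
    (h : ∀ k < 2 * n + 1, ‖p.eval (ζ ^ k)‖ = ‖q.eval (ζ ^ k)‖) :
    p * conjReflect n p = q * conjReflect n q := by
  have hdeg {r : ℂ[X]} (hr : r.natDegree ≤ n) : (r * conjReflect n r).natDegree ≤ 2 * n :=
    natDegree_mul_le.trans (by linarith [natDegree_conjReflect_le hr])
  refine sub_eq_zero.mp (eq_zero_of_eval_primitiveRoot_pow_eq_zero hζ ?_ fun k hk ↦ ?_)
  · exact (natDegree_sub_le _ _).trans_lt (by have := hdeg hp; have := hdeg hq; omega)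
  · have hz : ‖ζ ^ k‖ = 1 := by rw [norm_pow, hζ.norm'_eq_one (by omega), one_pow]
    rw [eval_sub, eval_mul_conjReflect hp hz, eval_mul_conjReflect hq hz, h k hk, sub_self]

theorem norm_eval_eq_of_mul_conjReflect_eq (hp : p.natDegree ≤ n) (hq : q.natDegree ≤ n)
    (h : p * conjReflect n p = q * conjReflect n q) {z : ℂ} (hz : ‖z‖ = 1) :
    ‖p.eval z‖ = ‖q.eval z‖ := by
  have hz0 : z ^ n ≠ 0 := pow_ne_zero _ (by rintro rfl; simp at hz)
  have h := mul_right_cancel₀ hz0 <| by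
    simpa only [eval_mul_conjReflect hp hz, eval_mul_conjReflect hq hz] using congrArg (eval z) h
  exact (pow_left_inj₀ (norm_nonneg _) (norm_nonneg _) two_ne_zero).mp (by exact_mod_cast h)

theorem conjReflect_mul_sub_eq_of_mul_conjReflect_eq (hp : p.natDegree ≤ n)
    (hq : q.natDegree ≤ n) (h : p * conjReflect n p = q * conjReflect n q) :
    conjReflect n p * (X * derivative p) - p * conjReflect n (X * derivative p) =
      conjReflect n q * (X * derivative q) - q * conjReflect n (X * derivative q) := by
  have hd := congrArg derivative h
  rw [derivative_mul, derivative_mul] at hd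
  rw [conjReflect_X_mul_derivative hp, conjReflect_X_mul_derivative hq]
  linear_combination X * hd - C (n : ℂ) * h

theorem conjReflect_mul_sub_mul_add_eq_zero (hp : p.natDegree ≤ n) (hq : q.natDegree ≤ n)
    (H₀ : p * conjReflect n p = q * conjReflect n q)
    (H₁ : X * derivative p * conjReflect n (X * derivative p) =
      X * derivative q * conjReflect n (X * derivative q)) :
    (conjReflect n p * (X * derivative p) - conjReflect n q * (X * derivative q)) *
      (conjReflect n p * (X * derivative p) + q * conjReflect n (X * derivative q)) = 0 := by
  have hr := (natDegree_X_mul_derivative_le p).trans hp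
  have hs := (natDegree_X_mul_derivative_le q).trans hq
  have him := conjReflect_mul_sub_eq_of_mul_conjReflect_eq hp hq H₀
  set r := X * derivative p
  set s := X * derivative q
  refine eq_zero_of_eval_eq_zero_of_norm_eq_one fun z hz ↦ ?_
  have hz0 : z ^ n ≠ 0 := pow_ne_zero _ (by rintro rfl; simp at hz)
  replace him := congrArg (eval z) him
  simp only [eval_sub, eval_mul, eval_add, eval_conjReflect hp hz, eval_conjReflect hq hz,
    eval_conjReflect hr hz, eval_conjReflect hs hz] at him ⊢
  have key := Complex.sub_mul_add_conj_eq_zero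
    (w₁ := conj (p.eval z) * r.eval z) (w₂ := conj (q.eval z) * s.eval z)
    (by simp only [norm_mul, Complex.norm_conj, norm_eval_eq_of_mul_conjReflect_eq hp hq H₀ hz,
      norm_eval_eq_of_mul_conjReflect_eq hr hs H₁ hz])
    (mul_right_cancel₀ hz0 (by simp only [map_mul, Complex.conj_conj]; linear_combination him))
  simp only [map_mul, Complex.conj_conj] at key
  linear_combination (z ^ n) ^ 2 * key

theorem coeff_conjReflect_mul_X_mul_derivative (n : ℕ) (p : ℂ[X]) :
    (conjReflect n p * (X * derivative p)).coeff n =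
      ((∑ i ∈ range (n + 1), i * ‖p.coeff i‖ ^ 2 : ℝ) : ℂ) := by
  rw [coeff_conjReflect_mul]
  push_cast
  refine sum_congr rfl fun i _ ↦ ?_
  rw [coeff_X_mul_derivative, ← Complex.conj_mul']
  ring

theorem coeff_conjReflect_X_mul_derivative_mul (n : ℕ) (p : ℂ[X]) :
    (conjReflect n (X * derivative p) * p).coeff n =
      ((∑ i ∈ range (n + 1), i * ‖p.coeff i‖ ^ 2 : ℝ) : ℂ) := by
  rw [coeff_conjReflect_mul]
  push_cast
  refine sum_congr rfl fun i _ ↦ ?_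
  rw [coeff_X_mul_derivative, map_mul, map_natCast, ← Complex.conj_mul']
  ring

theorem X_mul_derivative_eq_zero_of_sum_eq_zero (hp : p.natDegree ≤ n)
    (h : ∑ i ∈ range (n + 1), (i : ℝ) * ‖p.coeff i‖ ^ 2 = 0) : X * derivative p = 0 := by
  ext i
  rw [coeff_X_mul_derivative, coeff_zero]
  rcases le_or_gt i n with hi | hi
  · have := (sum_eq_zero_iff_of_nonneg fun j _ ↦ by positivity).mp h i
      (mem_range.mpr (Nat.lt_succ_of_le hi))
    rcases mul_eq_zero.mp this with h0 | h0
    · simp [show i = 0 by exact_mod_cast h0]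
    · simp [norm_eq_zero.mp (pow_eq_zero_iff two_ne_zero |>.mp h0)]
  · rw [coeff_eq_zero_of_natDegree_lt (hp.trans_lt hi), mul_zero]

theorem X_mul_derivative_eq_zero_of_conjReflect_mul_eq_neg (hp : p.natDegree ≤ n)
    (hq : q.natDegree ≤ n)
    (h : conjReflect n p * (X * derivative p) = -(q * conjReflect n (X * derivative q))) :
    X * derivative p = 0 ∧ X * derivative q = 0 := by
  have hcoeff := congrArg (coeff · n) h
  simp only [coeff_neg, mul_comm q, coeff_conjReflect_mul_X_mul_derivative,
    coeff_conjReflect_X_mul_derivative_mul] at hcoeff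
  norm_cast at hcoeff
  have hP : 0 ≤ ∑ i ∈ range (n + 1), (i : ℝ) * ‖p.coeff i‖ ^ 2 := by positivity
  have hQ : 0 ≤ ∑ i ∈ range (n + 1), (i : ℝ) * ‖q.coeff i‖ ^ 2 := by positivity
  exact ⟨X_mul_derivative_eq_zero_of_sum_eq_zero hp (by linarith),
    X_mul_derivative_eq_zero_of_sum_eq_zero hq (by linarith)⟩

theorem conjReflect_mul_X_mul_derivative_eq (hp : p.natDegree ≤ n) (hq : q.natDegree ≤ n)
    (H₀ : p * conjReflect n p = q * conjReflect n q)
    (H₁ : X * derivative p * conjReflect n (X * derivative p) =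
      X * derivative q * conjReflect n (X * derivative q)) :
    conjReflect n p * (X * derivative p) = conjReflect n q * (X * derivative q) := by
  rcases mul_eq_zero.mp (conjReflect_mul_sub_mul_add_eq_zero hp hq H₀ H₁) with h | h
  · exact sub_eq_zero.mp h
  · obtain ⟨hr, hs⟩ :=
      X_mul_derivative_eq_zero_of_conjReflect_mul_eq_neg hp hq (eq_neg_of_add_eq_zero_left h)
    rw [hr, hs, mul_zero, mul_zero]

theorem wronskian_eq_zero_of_conjReflect_mul_eq (hp : p ≠ 0)
    (H₀ : p * conjReflect n p = q * conjReflect n q)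
    (H : conjReflect n p * (X * derivative p) = conjReflect n q * (X * derivative q)) :
    wronskian p q = 0 := by
  have h : X * conjReflect n p * wronskian p q = 0 := by
    rw [wronskian]
    linear_combination (X * derivative q) * H₀ - q * H
  simpa [X_ne_zero, conjReflect_eq_zero_iff, hp] using h

theorem norm_eq_one_of_mul_conjReflect_eq {c : ℂ} (hp : p ≠ 0)
    (h : C c * p * conjReflect n (C c * p) = p * conjReflect n p) : ‖c‖ = 1 := by
  rw [conjReflect_C_mul] at h
  have hc : C (c * conj c) * (p * conjReflect n p) = 1 * (p * conjReflect n p) := by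
    rw [C_mul]; linear_combination h
  replace hc := mul_right_cancel₀ (mul_ne_zero hp (conjReflect_eq_zero_iff.not.mpr hp)) hc
  rw [← C_1, C_inj, Complex.mul_conj'] at hc
  exact (pow_eq_one_iff_of_nonneg (norm_nonneg c) two_ne_zero).mp (by exact_mod_cast hc)

theorem exists_norm_eq_one_eq_C_mul_of_mul_conjReflect_eq (hp : p.natDegree ≤ n)
    (hq : q.natDegree ≤ n) (H₀ : p * conjReflect n p = q * conjReflect n q)
    (H₁ : X * derivative p * conjReflect n (X * derivative p) =
      X * derivative q * conjReflect n (X * derivative q)) :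
    ∃ c : ℂ, ‖c‖ = 1 ∧ q = C c * p := by
  rcases eq_or_ne p 0 with rfl | hp0
  · have hq0 : q = 0 := by simpa [conjReflect_eq_zero_iff] using H₀.symm
    exact ⟨1, by simp, by simp [hq0]⟩
  have hW := wronskian_eq_zero_of_conjReflect_mul_eq hp0 H₀
    (conjReflect_mul_X_mul_derivative_eq hp hq H₀ H₁)
  obtain ⟨c, rfl⟩ := exists_eq_C_mul_of_wronskian_eq_zero hp0 hW
  exact ⟨c, norm_eq_one_of_mul_conjReflect_eq hp0 H₀.symm, rfl⟩

end conjReflect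

end Polynomial

section trigPoly

variable {N : ℕ}

theorem trigPoly_eq_eval_ofFn (φ : Fin N → ℂ) (x : ℝ) :
    trigPoly φ x = (ofFn N φ).eval (Complex.exp (2 * π * Complex.I * x)) := by
  rw [trigPoly, ofFn_eq_sum_monomial, eval_finsetSum]
  refine sum_congr rfl fun j _ ↦ ?_
  rw [eval_monomial, ← Complex.exp_nat_mul]
  ring_nf

theorem X_mul_derivative_ofFn (φ : Fin N → ℂ) :
    X * derivative (ofFn N φ) = ofFn N fun j ↦ (j : ℂ) * φ j := by
  ext i
  rw [coeff_X_mul_derivative]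
  rcases lt_or_ge i N with hi | hi
  · rw [ofFn_coeff_eq_val_of_lt _ hi, ofFn_coeff_eq_val_of_lt _ hi]
  · rw [ofFn_coeff_eq_zero_of_ge _ hi, ofFn_coeff_eq_zero_of_ge _ hi, mul_zero]

theorem trigPolyDeriv_eq_eval_ofFn (φ : Fin N → ℂ) (x : ℝ) :
    trigPolyDeriv φ x = 2 * π * Complex.I *
      (X * derivative (ofFn N φ)).eval (Complex.exp (2 * π * Complex.I * x)) := by
  rw [X_mul_derivative_ofFn, ← trigPoly_eq_eval_ofFn, trigPolyDeriv, trigPoly, mul_sum]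
  exact sum_congr rfl fun j _ ↦ by ring

end trigPoly

theorem samples_modulus_and_deriv_modulus_determine
    (N : ℕ) (hN : 1 ≤ N) (φ ψ : Fin N → ℂ)
    (h1 : ∀ k : ℕ, k ≤ 2 * N - 2 →
      ‖trigPoly φ (k / (2 * N - 1))‖
        = ‖trigPoly ψ (k / (2 * N - 1))‖)
    (h2 : ∀ k : ℕ, k ≤ 2 * N - 2 →
      ‖trigPolyDeriv φ (k / (2 * N - 1))‖
        = ‖trigPolyDeriv ψ (k / (2 * N - 1))‖) :
    ∃ l : ℂ, ‖l‖ = 1 ∧ ψ = fun j => l * φ j := by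
  obtain ⟨n, rfl⟩ : ∃ n, N = n + 1 := ⟨N - 1, by omega⟩
  have hζ := Complex.isPrimitiveRoot_exp (2 * n + 1) (by omega)
  have hsample (k : ℕ) :
      Complex.exp (2 * π * Complex.I * ((k / (2 * ↑(n + 1) - 1) : ℝ) : ℂ)) =
        Complex.exp (2 * π * Complex.I / ↑(2 * n + 1)) ^ k := by
    rw [← Complex.exp_nat_mul]
    congr 1
    push_cast
    ring
  have hdeg (χ : Fin (n + 1) → ℂ) : (ofFn (n + 1) χ).natDegree ≤ n :=
    Nat.lt_succ_iff.mp (ofFn_natDegree_lt (by omega) χ)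
  have H₀ := mul_conjReflect_eq_of_norm_eval_pow_eq hζ (hdeg φ) (hdeg ψ) fun k hk ↦ by
    simpa only [trigPoly_eq_eval_ofFn, hsample] using h1 k (by omega)
  have H₁ := mul_conjReflect_eq_of_norm_eval_pow_eq hζ
    ((natDegree_X_mul_derivative_le _).trans (hdeg φ))
    ((natDegree_X_mul_derivative_le _).trans (hdeg ψ)) fun k hk ↦ by
      have h := h2 k (by omega)
      rwa [trigPolyDeriv_eq_eval_ofFn, trigPolyDeriv_eq_eval_ofFn, norm_mul _ (eval _ _),
        norm_mul _ (eval _ _), mul_right_inj' (by simp [pi_ne_zero]), hsample] at h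
  obtain ⟨l, hl, hψ⟩ :=
    exists_norm_eq_one_eq_C_mul_of_mul_conjReflect_eq (hdeg φ) (hdeg ψ) H₀ H₁
  refine ⟨l, hl, injective_ofFn (n + 1) ?_⟩
  rw [hψ, ← smul_eq_C_mul, ← map_smul]
  rfl
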